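/- arXiv:0910.5453 — 2 statements merged into one kernel-verified Lean document; each statement's English description precedes it below -/
import Mathlib

section
/- For every positive integer m, the polynomial U_m = Σ_{i=1}^{6} [ ((x7-x8)/2 - x_i + S6/6)^m + (-(x7-x8)/2 - x_i + S6/6)^m ] + Σ_{1 ≤ i < j ≤ 6} (x_i + x_j - S6/3)^m, where S6 = x1+...+x6, is invariant under every permutation of x1,...,x6, under the transposition of x7 and x8, and under the reflection r(x) = x - (⟨x,n⟩/4)·n with n = (1,1,1,-1,-1,-1,1,-1) (reflection in the hyperplane x1+x2+x3+x7 = x4+x5+x6+x8); i.e. U_m ∘ g = U_m as polynomials in x1,...,x8 for each such linear map g. -/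
open MvPolynomial

noncomputable section

/-- `S6 = x₁ + ⋯ + x₆` inside the eight variables `x₁,…,x₈`. -/
def S6 : MvPolynomial (Fin 8) ℚ := X 0 + X 1 + X 2 + X 3 + X 4 + X 5

/-- The normal vector `n = (1,1,1,-1,-1,-1,1,-1)` of the mirror
`x₁+x₂+x₃+x₇ = x₄+x₅+x₆+x₈`. -/
def nE6 : Fin 8 → ℚ := ![1, 1, 1, -1, -1, -1, 1, -1]

/-- The matrix of the reflection `r(x) = x - (⟨x,n⟩/4)·n`. -/
def RE6 : Matrix (Fin 8) (Fin 8) ℚ :=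
  fun i j => (if i = j then 1 else 0) - nE6 i * nE6 j / 4

/-- Action of the linear map with matrix `M` on a polynomial: `P ↦ P ∘ M`,
i.e. substitute `xᵢ ↦ ∑ⱼ Mᵢⱼ xⱼ`. -/
def applyLin {n : ℕ} (M : Matrix (Fin n) (Fin n) ℚ) (P : MvPolynomial (Fin n) ℚ) :
    MvPolynomial (Fin n) ℚ :=
  aeval (fun i => ∑ j : Fin n, C (M i j) * X j) P

/-- The `E₆`-invariant polynomial `U_m`. -/
def U (m : ℕ) : MvPolynomial (Fin 8) ℚ :=
  (∑ i ∈ Finset.univ.filter (fun i : Fin 8 => i.val < 6),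
      ((C (1/2 : ℚ) * (X 6 - X 7) - X i + C (1/6 : ℚ) * S6) ^ m +
        (-(C (1/2 : ℚ) * (X 6 - X 7)) - X i + C (1/6 : ℚ) * S6) ^ m)) +
    ∑ p ∈ Finset.univ.filter (fun p : Fin 8 × Fin 8 => p.1.val < p.2.val ∧ p.2.val < 6),
      (X p.1 + X p.2 - C (1/3 : ℚ) * S6) ^ m

/-!
`U m` is the sum of the `m`-th powers of 27 linear forms, the weights of the minuscule
representation of `E₆`. A linear substitution sends a linear form with coefficient vector `c` to
the one with coefficient vector `c ᵥ* M`, so `U m` is invariant as soon as the substitution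
permutes these 27 coefficient vectors. For the reflection and the transposition of `x₇, x₈` this
is a finite computation; a permutation of `x₁, …, x₆` just relabels the indices `i` and the
pairs `{i, j}`.
-/

namespace MvPolynomial

variable {σ τ R : Type*} [Fintype σ] [Fintype τ] [CommSemiring R]

def linForm : (σ → R) →ₗ[R] MvPolynomial σ R :=
  Fintype.linearCombination R X

theorem linForm_apply (c : σ → R) : linForm c = ∑ i, c i • X i :=
  Fintype.linearCombination_apply R X c

theorem linForm_single [DecidableEq σ] (k : σ) (r : R) : linForm (Pi.single k r) = r • X k :=
  Fintype.linearCombination_apply_single R X k r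

theorem rename_linForm (e : σ ≃ τ) (c : σ → R) :
    rename e (linForm c) = linForm (c ∘ e.symm) := by
  simp only [linForm_apply, map_sum, map_smul, rename_X, Function.comp_apply]
  exact Fintype.sum_equiv e _ _ (fun i => by simp)

def linFormPowerSum (ws : Multiset (σ → R)) (m : ℕ) : MvPolynomial σ R :=
  (ws.map fun c => linForm c ^ m).sum

theorem map_linFormPowerSum {F : Type*} [FunLike F (MvPolynomial σ R) (MvPolynomial τ R)]
    [RingHomClass F (MvPolynomial σ R) (MvPolynomial τ R)] (φ : F) {g : (σ → R) → τ → R}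
    (hφ : ∀ c, φ (linForm c) = linForm (g c)) (ws : Multiset (σ → R)) (m : ℕ) :
    φ (linFormPowerSum ws m) = linFormPowerSum (ws.map g) m := by
  simp only [linFormPowerSum, map_multiset_sum, Multiset.map_map, Function.comp_def, map_pow, hφ]

end MvPolynomial

open Matrix

theorem applyLin_linForm {n : ℕ} (M : Matrix (Fin n) (Fin n) ℚ) (c : Fin n → ℚ) :
    applyLin M (linForm c) = linForm (c ᵥ* M) := by
  have hrow : ∀ i, ∑ j, C (M i j) * X j = (linForm (M i) : MvPolynomial (Fin n) ℚ) := fun i => by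
    simp only [linForm_apply, smul_eq_C_mul]
  rw [applyLin, linForm_apply c, vecMul_eq_sum]
  simp only [map_sum, map_smul, aeval_X, hrow]

theorem Finset.sum_offDiag_lt_comp_perm {ι M : Type*} [LinearOrder ι] [AddCommMonoid M]
    {s : Finset ι} {σ : Equiv.Perm ι} (hσ : ∀ i, σ i ∈ s ↔ i ∈ s) {g : ι → ι → M}
    (hg : ∀ i j, g i j = g j i) :
    ∑ p ∈ s.offDiag with p.1 < p.2, g (σ p.1) (σ p.2) =
      ∑ p ∈ s.offDiag with p.1 < p.2, g p.1 p.2 := by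
  let G : Sym2 ι → M := Sym2.lift ⟨g, hg⟩
  have hσ' : ∀ i, σ.symm i ∈ s ↔ i ∈ s := fun i => by simpa using (hσ (σ.symm i)).symm
  calc ∑ p ∈ s.offDiag with p.1 < p.2, g (σ p.1) (σ p.2)
      = ∑ z ∈ s.sym2 with ¬ z.IsDiag, G (z.map σ) := by
        rw [Finset.sum_sym2_filter_not_isDiag]; rfl
    _ = ∑ z ∈ s.sym2 with ¬ z.IsDiag, G z := by
        refine Finset.sum_nbij' (Sym2.map σ) (Sym2.map σ.symm) ?_ ?_ ?_ ?_ (fun _ _ => rfl)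
        · intro z hz
          simp_all [Finset.mem_sym2_iff, Sym2.isDiag_map σ.injective]
        · intro z hz
          simp_all [Finset.mem_sym2_iff, Sym2.isDiag_map σ.symm.injective]
        · intro z _; simp [Sym2.map_map]
        · intro z _; simp [Sym2.map_map]
    _ = ∑ p ∈ s.offDiag with p.1 < p.2, g p.1 p.2 := by
        rw [Finset.sum_sym2_filter_not_isDiag]; rfl

def s6Vec : Fin 8 → ℚ := fun j => if j.val < 6 then 1 else 0

def weightPlus (i : Fin 8) : Fin 8 → ℚ :=
  (1/2 : ℚ) • (Pi.single 6 1 - Pi.single 7 1) - Pi.single i 1 + (1/6 : ℚ) • s6Vec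

def weightMinus (i : Fin 8) : Fin 8 → ℚ :=
  -((1/2 : ℚ) • (Pi.single 6 1 - Pi.single 7 1)) - Pi.single i 1 + (1/6 : ℚ) • s6Vec

def weightPair (p : Fin 8 × Fin 8) : Fin 8 → ℚ :=
  Pi.single p.1 1 + Pi.single p.2 1 - (1/3 : ℚ) • s6Vec

def e6Weights : Multiset (Fin 8 → ℚ) :=
  (Finset.univ.filter (fun i : Fin 8 => i.val < 6)).val.map weightPlus +
    (Finset.univ.filter (fun i : Fin 8 => i.val < 6)).val.map weightMinus +
    (Finset.univ.filter (fun p : Fin 8 × Fin 8 => p.1.val < p.2.val ∧ p.2.val < 6)).val.map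
      weightPair

theorem linForm_s6Vec : linForm s6Vec = S6 := by
  simp [linForm_apply, s6Vec, S6, Fin.sum_univ_eight]

theorem U_eq_linFormPowerSum (m : ℕ) : U m = linFormPowerSum e6Weights m := by
  simp only [U, linFormPowerSum, e6Weights, Multiset.map_add, Multiset.sum_add, Multiset.map_map,
    Function.comp_def, ← Finset.sum_eq_multiset_sum, Finset.sum_add_distrib, weightPlus,
    weightMinus, weightPair, map_add, map_sub, map_neg, map_smul, linForm_single, linForm_s6Vec,
    one_smul, smul_eq_C_mul]

/- The reflection fixes the 15 weights orthogonal to `n` and exchanges the remaining 12 in pairs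
`c ↔ c - n/2`, e.g. `weightPlus 3 ↔ weightPair (4, 5)` and `weightPair (0, 1) ↔ weightMinus 2`. -/
theorem e6Weights_map_vecMul_RE6 : e6Weights.map (· ᵥ* RE6) = e6Weights := by
  decide +kernel

theorem e6Weights_map_comp_swap : e6Weights.map (· ∘ Equiv.swap 6 7) = e6Weights := by
  decide +kernel

theorem applyLin_RE6_U (m : ℕ) : applyLin RE6 (U m) = U m := by
  rw [U_eq_linFormPowerSum, applyLin, map_linFormPowerSum _ (applyLin_linForm RE6),
    e6Weights_map_vecMul_RE6]

theorem rename_swap_U (m : ℕ) : rename (Equiv.swap (6 : Fin 8) 7) (U m) = U m := by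
  rw [U_eq_linFormPowerSum, map_linFormPowerSum _ (rename_linForm _), Equiv.symm_swap,
    e6Weights_map_comp_swap]

theorem val_lt_six_iff_of_fix {σ : Equiv.Perm (Fin 8)} (h6 : σ 6 = 6) (h7 : σ 7 = 7)
    (i : Fin 8) : (σ i).val < 6 ↔ i.val < 6 := by
  have key : ∀ j : Fin 8, j.val < 6 ↔ j ≠ 6 ∧ j ≠ 7 := by decide
  have e6 : σ i = 6 ↔ i = 6 := by simpa [h6] using σ.injective.eq_iff (a := i) (b := 6)
  have e7 : σ i = 7 ↔ i = 7 := by simpa [h7] using σ.injective.eq_iff (a := i) (b := 7)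
  rw [key, key, Ne, Ne, e6, e7]

theorem rename_U_of_fix (m : ℕ) {σ : Equiv.Perm (Fin 8)} (h6 : σ 6 = 6) (h7 : σ 7 = 7) :
    rename σ (U m) = U m := by
  have hσ := val_lt_six_iff_of_fix h6 h7
  have hS6 : rename σ S6 = S6 := by
    rw [← linForm_s6Vec, rename_linForm]
    congr 1
    ext j
    simp only [s6Vec, Function.comp_apply, ← hσ (σ.symm j), Equiv.apply_symm_apply]
  have hpairs : Finset.univ.filter (fun p : Fin 8 × Fin 8 => p.1.val < p.2.val ∧ p.2.val < 6) =
      (Finset.univ.filter (fun i : Fin 8 => i.val < 6)).offDiag.filter (fun p => p.1 < p.2) := by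
    decide
  simp only [U, map_add, map_sum, map_pow, map_sub, map_neg, map_mul, rename_X, rename_C, hS6,
    h6, h7, hpairs]
  congr 1
  · exact Finset.sum_equiv σ (fun i => by simp [hσ]) (fun _ _ => rfl)
  · exact Finset.sum_offDiag_lt_comp_perm (fun i => by simp [hσ])
      (g := fun i j => (X i + X j - C (1/3 : ℚ) * S6) ^ m) (fun i j => by rw [add_comm (X i)])

theorem U_invariant_general (m : ℕ) :
    applyLin RE6 (U m) = U m ∧
    (∀ σ : Equiv.Perm (Fin 8), σ 6 = 6 → σ 7 = 7 → rename σ (U m) = U m) ∧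
    rename (Equiv.swap (6 : Fin 8) 7) (U m) = U m :=
  ⟨applyLin_RE6_U m, fun _ h6 h7 => rename_U_of_fix m h6 h7, rename_swap_U m⟩

/-- For every positive `m`, `U_m` is invariant under the reflection in
`x₁+x₂+x₃+x₇ = x₄+x₅+x₆+x₈`, under every permutation of `x₁,…,x₆`, and under
the transposition of `x₇` and `x₈`. -/
theorem U_invariant (m : ℕ) (hm : 0 < m) :
    applyLin RE6 (U m) = U m ∧
    (∀ σ : Equiv.Perm (Fin 8), σ 6 = 6 → σ 7 = 7 → rename σ (U m) = U m) ∧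
    rename (Equiv.swap (6 : Fin 8) 7) (U m) = U m :=
  U_invariant_general m
end
end

section
/- For every k ∈ {2, 5, 6, 8, 9, 12}, one has the identity ⟨du_2, du_k⟩* = 2k · u_k as polynomials in the six variables y. -/
/-!
Write `u₂ = yᵀ G y` with `G` symmetric. Then `∂u₂ = 2 G y`, so `G⁻¹` cancels in the pairing and
`⟨du₂, dq⟩* = 2 ∑ⱼ yⱼ ∂q/∂yⱼ`, which by Euler's identity is `2n · q` for every `q` homogeneous of
degree `n`. Each `u_k` is homogeneous of degree `k`, being a power sum of linear forms restricted
along a linear substitution. The only explicit computation is `G` itself, which must be invertible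
for `G⁻¹` to be more than the junk value `0`.
-/

open MvPolynomial

noncomputable section

/-- Restriction to the subspace `S6 = 0`, `x₇ + x₈ = 0`:
substitute `x₆ = -(x₁+⋯+x₅)` and `x₈ = -x₇`, with the remaining
variables `y = (x₁,…,x₅,x₇)`. -/
def subE6 : Fin 8 → MvPolynomial (Fin 6) ℚ :=
  ![X 0, X 1, X 2, X 3, X 4, -(X 0 + X 1 + X 2 + X 3 + X 4), X 5, -X 5]

/-- The basic invariants `u_m` in the six variables `y`, with `u₂ = U₂/12`. -/
def u (m : ℕ) : MvPolynomial (Fin 6) ℚ :=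
  if m = 2 then C (1/12 : ℚ) * aeval subE6 (U 2) else aeval subE6 (U m)

/-- The symmetric matrix `G` determined by `u₂(y) = ∑ᵢⱼ Gᵢⱼ yᵢ yⱼ`. -/
def GE6 : Matrix (Fin 6) (Fin 6) ℚ := fun i j =>
  if i = j then coeff (Finsupp.single i 2) (u 2)
  else (1/2) * coeff (Finsupp.single i 1 + Finsupp.single j 1) (u 2)

/-- The pairing `⟨dp, dq⟩* = ∑ᵢⱼ (∂p/∂yᵢ) (G⁻¹)ᵢⱼ (∂q/∂yⱼ)`. -/
def pairE6 (p q : MvPolynomial (Fin 6) ℚ) : MvPolynomial (Fin 6) ℚ :=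
  ∑ i : Fin 6, ∑ j : Fin 6, C (GE6⁻¹ i j) * pderiv i p * pderiv j q

namespace MvPolynomial

section CommRing

variable {σ R : Type*} [Fintype σ] [CommRing R]

def quadPoly (G : Matrix σ σ R) : MvPolynomial σ R :=
  ∑ i, ∑ j, C (G i j) * X i * X j

variable [DecidableEq σ]

lemma coeff_single_two_quadPoly (G : Matrix σ σ R) (k : σ) :
    coeff (Finsupp.single k 2) (quadPoly G) = G k k := by
  have key : ∀ i j : σ, Finsupp.single i 1 + Finsupp.single j 1 = Finsupp.single k 2 ↔
      i = k ∧ j = k := by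
    intro i j
    rw [show (2 : ℕ) = 1 + 1 from rfl, Finsupp.single_add,
      Finsupp.single_add_single_eq_single_add_single one_ne_zero one_ne_zero]
    aesop
  simp only [quadPoly, coeff_sum, mul_assoc, coeff_C_mul, X, monomial_mul,
    coeff_monomial, key, ite_and, mul_ite, mul_one, mul_zero]
  simp

lemma coeff_single_add_single_quadPoly (G : Matrix σ σ R) {k l : σ} (hkl : k ≠ l) :
    coeff (Finsupp.single k 1 + Finsupp.single l 1) (quadPoly G) = G k l + G l k := by
  have key : ∀ i j : σ, Finsupp.single i 1 + Finsupp.single j 1 =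
      Finsupp.single k 1 + Finsupp.single l 1 ↔ (i = k ∧ j = l) ∨ (i = l ∧ j = k) := by
    intro i j
    rw [Finsupp.single_add_single_eq_single_add_single one_ne_zero one_ne_zero]
    aesop
  simp only [quadPoly, coeff_sum, mul_assoc, coeff_C_mul, X, monomial_mul,
    coeff_monomial, key, mul_ite, mul_one, mul_zero]
  rw [Fintype.sum_eq_add k l hkl]
  · simp [hkl, hkl.symm]
  · intro i ⟨hik, hil⟩
    simp [hik, hil]

lemma pderiv_quadPoly (G : Matrix σ σ R) (k : σ) :
    pderiv k (quadPoly G) = ∑ j, C (G k j + G j k) * X j := by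
  simp only [quadPoly, map_sum, Derivation.leibniz, pderiv_X, Pi.single_apply, smul_eq_mul, mul_ite,
    mul_one, mul_zero, derivation_C, add_zero, Finset.sum_add_distrib, Finset.sum_ite_eq',
    Finset.mem_univ, if_true, Finset.sum_ite_irrel, Finset.sum_const_zero, C_add]
  rw [add_comm, ← Finset.sum_add_distrib]
  exact Finset.sum_congr rfl fun j _ => by ring

variable {G : Matrix σ σ R}

lemma sum_C_inv_mul_pderiv_quadPoly (hG : G.IsSymm) (hdet : IsUnit G.det) (j : σ) :
    ∑ i, C (G⁻¹ i j) * pderiv i (quadPoly G) = 2 * X j := by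
  calc ∑ i, C (G⁻¹ i j) * pderiv i (quadPoly G)
      = ∑ l, C (2 * ∑ i, G l i * G⁻¹ i j) * X l := by
        simp only [pderiv_quadPoly, Finset.mul_sum, hG.apply]
        rw [Finset.sum_comm]
        simp only [map_mul, map_sum, Finset.sum_mul]
        refine Finset.sum_congr rfl fun l _ => Finset.sum_congr rfl fun i _ => ?_
        rw [← hG.apply i l, map_add, map_ofNat]
        ring
    _ = 2 * X j := by
        simp only [← Matrix.mul_apply, Matrix.mul_nonsing_inv G hdet, Matrix.one_apply, mul_ite,
          mul_one, mul_zero, apply_ite C, map_zero, ite_mul, zero_mul, Finset.sum_ite_eq',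
          Finset.mem_univ, if_true, map_ofNat]

lemma sum_C_inv_mul_pderiv_quadPoly_mul_pderiv {n : ℕ} (hG : G.IsSymm) (hdet : IsUnit G.det)
    {q : MvPolynomial σ R} (hq : q.IsHomogeneous n) :
    ∑ i, ∑ j, C (G⁻¹ i j) * pderiv i (quadPoly G) * pderiv j q = C (2 * (n : R)) * q := by
  rw [Finset.sum_comm]
  simp_rw [← Finset.sum_mul, sum_C_inv_mul_pderiv_quadPoly hG hdet, mul_assoc, ← Finset.mul_sum,
    hq.sum_X_mul_pderiv]
  rw [nsmul_eq_mul, map_mul, map_natCast, map_ofNat, mul_assoc]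

end CommRing

section Field

variable {σ K : Type*} [DecidableEq σ] [Field K]

def polarMatrix (p : MvPolynomial σ K) : Matrix σ σ K := fun i j =>
  if i = j then coeff (Finsupp.single i 2) p
  else (1/2) * coeff (Finsupp.single i 1 + Finsupp.single j 1) p

lemma polarMatrix_quadPoly [Fintype σ] [NeZero (2 : K)] {G : Matrix σ σ K} (hG : G.IsSymm) :
    polarMatrix (quadPoly G) = G := by
  ext i j
  by_cases hij : i = j
  · subst hij
    simp [polarMatrix, coeff_single_two_quadPoly]
  · rw [polarMatrix, if_neg hij, coeff_single_add_single_quadPoly G hij, hG.apply]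
    field_simp
    ring

end Field

end MvPolynomial

lemma S6_isHomogeneous : S6.IsHomogeneous 1 := by
  unfold S6
  apply_rules [IsHomogeneous.add, isHomogeneous_X]

lemma U_isHomogeneous (m : ℕ) : (U m).IsHomogeneous m := by
  have hpow : ∀ {L : MvPolynomial (Fin 8) ℚ}, L.IsHomogeneous 1 → (L ^ m).IsHomogeneous m :=
    fun hL => by simpa using hL.pow m
  have hX := isHomogeneous_X ℚ (σ := Fin 8)
  have hD := ((hX 6).sub (hX 7)).C_mul (1/2 : ℚ)
  have hS := S6_isHomogeneous.C_mul (1/6 : ℚ)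
  exact .add
    (.sum _ _ _ fun i _ =>
      .add (hpow ((hD.sub (hX i)).add hS)) (hpow ((hD.neg.sub (hX i)).add hS)))
    (.sum _ _ _ fun p _ => hpow (((hX p.1).add (hX p.2)).sub (S6_isHomogeneous.C_mul _)))

lemma subE6_isHomogeneous (i : Fin 8) : (subE6 i).IsHomogeneous 1 := by
  fin_cases i <;>
    simp only [subE6, Fin.isValue, Fin.reduceFinMk, Fin.zero_eta, Fin.mk_one, Matrix.cons_val] <;>
    apply_rules [IsHomogeneous.add, IsHomogeneous.neg, isHomogeneous_X]

lemma u_isHomogeneous (m : ℕ) : (u m).IsHomogeneous m := by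
  have h := (U_isHomogeneous m).aeval subE6 subE6_isHomogeneous
  rw [one_mul] at h
  unfold u
  split_ifs with hm
  · subst hm
    exact h.C_mul _
  · exact h

def gramE6 : Matrix (Fin 6) (Fin 6) ℚ :=
  !![1, 1/2, 1/2, 1/2, 1/2, 0;
     1/2, 1, 1/2, 1/2, 1/2, 0;
     1/2, 1/2, 1, 1/2, 1/2, 0;
     1/2, 1/2, 1/2, 1, 1/2, 0;
     1/2, 1/2, 1/2, 1/2, 1, 0;
     0, 0, 0, 0, 0, 1]

lemma gramE6_isSymm : gramE6.IsSymm := by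
  ext i j
  fin_cases i <;> fin_cases j <;> rfl

lemma isUnit_det_gramE6 : IsUnit gramE6.det := by
  apply Matrix.isUnit_det_of_right_inverse (B := !![5/3, -1/3, -1/3, -1/3, -1/3, 0;
     -1/3, 5/3, -1/3, -1/3, -1/3, 0;
     -1/3, -1/3, 5/3, -1/3, -1/3, 0;
     -1/3, -1/3, -1/3, 5/3, -1/3, 0;
     -1/3, -1/3, -1/3, -1/3, 5/3, 0;
     0, 0, 0, 0, 0, 1])
  ext i j
  fin_cases i <;> fin_cases j <;> simp [gramE6, Matrix.mul_apply, Fin.sum_univ_six] <;> norm_num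

lemma u_two_eq_quadPoly : u 2 = quadPoly gramE6 := by
  apply MvPolynomial.funext
  intro x
  simp only [u, ↓reduceIte, U, S6, subE6, quadPoly, gramE6, Finset.sum_filter,
    Fintype.sum_prod_type, Fin.sum_univ_eight, Fin.sum_univ_six, Fin.isValue, Fin.coe_ofNat_eq_mod,
    Nat.reduceMod, Nat.reduceLT, and_true, and_false, add_zero, zero_add, map_add, map_sub, map_neg,
    map_mul, map_pow, map_zero, aeval_X, aeval_C, algebraMap_eq, eval_X, eval_C, Matrix.cons_val,
    Matrix.of_apply]
  ring

lemma GE6_eq_gramE6 : GE6 = gramE6 := by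
  change polarMatrix (u 2) = gramE6
  rw [u_two_eq_quadPoly, polarMatrix_quadPoly gramE6_isSymm]

lemma pairE6_u_two {n : ℕ} {q : MvPolynomial (Fin 6) ℚ} (hq : q.IsHomogeneous n) :
    pairE6 (u 2) q = C (2 * (n : ℚ)) * q := by
  rw [pairE6, GE6_eq_gramE6, u_two_eq_quadPoly]
  exact sum_C_inv_mul_pderiv_quadPoly_mul_pderiv gramE6_isSymm isUnit_det_gramE6 hq

/-- `⟨du₂, du_k⟩* = 2k · u_k` for each basic degree `k` of `E₆`. -/
theorem E6_pair_u2 :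
    ∀ k ∈ ({2, 5, 6, 8, 9, 12} : Finset ℕ),
      pairE6 (u 2) (u k) = C (2 * (k : ℚ)) * u k :=
  fun k _ => pairE6_u_two (u_isHomogeneous k)
end
end
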